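/- Let B : [0,1] → (symmetric bilinear forms on ℝ^g) be a continuous map such that B(t) is positive definite for every t ∈ [0,1]. Suppose σ ⊆ ℝ^g is a g-dimensional Delaunay cell of B(t) for every t ∈ (0,1]. Then there exists a Delaunay cell σ′ of B(0) with σ ⊆ σ′. -/

import Mathlib

open Matrix Set

noncomputable section

/-- The standard lattice `ℤ^g` sitting inside `ℝ^g`. -/
def latticePts (g : ℕ) : Set (Fin g → ℝ) :=
  Set.range (fun a : Fin g → ℤ => fun i => (a i : ℝ))

/-- `σ` is a (closed) Delaunay cell of the bilinear form `B`: there is an `α ∈ ℝ^g`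
such that `σ` is the convex hull of the lattice points nearest to `α`
(with respect to the distance defined by `B`). -/
def IsDelaunayCell {g : ℕ} (B : (Fin g → ℝ) → (Fin g → ℝ) → ℝ)
    (σ : Set (Fin g → ℝ)) : Prop :=
  ∃ α : Fin g → ℝ, σ = convexHull ℝ
    {a | a ∈ latticePts g ∧ ∀ b ∈ latticePts g, B (a - α) (a - α) ≤ B (b - α) (b - α)}

/-- `C(0,S)`: the cone generated by `S` over the nonnegative reals. -/
def cone0 {g : ℕ} (S : Set (Fin g → ℝ)) : Set (Fin g → ℝ) :=
  {x | ∃ r : ℝ, 0 ≤ r ∧ ∃ y ∈ convexHull ℝ S, x = r • y}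

/-- `Semi(0, S ∩ ℤ^g)`: the additive submonoid generated by the lattice points of `S`. -/
def semi0 {g : ℕ} (S : Set (Fin g → ℝ)) : Set (Fin g → ℝ) :=
  (AddSubmonoid.closure (S ∩ latticePts g) : AddSubmonoid (Fin g → ℝ))

/-!
For `t ∈ (0,1]` let `α t` be a centre exhibiting `σ` as a Delaunay cell of `B t`. By convexity of
the quadratic form, the lattice points of `σ` are exactly the lattice points nearest to `α t`, so
`α t` is equidistant (for `B t`) from `g + 1` affinely independent lattice points of `σ`. These
equidistance conditions form a linear system in `α t` whose matrix stays invertible up to `t = 0`,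
so `α t` extends continuously to `[0,1]`. Being a nearest lattice point is a closed condition on
the pair (form, centre), hence every lattice point of `σ` is nearest to `α 0` for `B 0`.
-/

open Filter Topology

namespace Matrix

variable {n : Type*} [Fintype n]

theorem IsHermitian.dotProduct_mulVec_comm {A : Matrix n n ℝ} (hA : A.IsHermitian)
    (x y : n → ℝ) : x ⬝ᵥ A *ᵥ y = y ⬝ᵥ A *ᵥ x := by
  rw [dotProduct_mulVec, dotProduct_comm, ← mulVec_transpose,
    ← conjTranspose_eq_transpose_of_trivial, hA.eq]

theorem PosSemidef.convexOn_dotProduct_mulVec {A : Matrix n n ℝ} (hA : A.PosSemidef) :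
    ConvexOn ℝ Set.univ fun x => x ⬝ᵥ A *ᵥ x := by
  refine ⟨convex_univ, fun x _ y _ a b ha hb hab => ?_⟩
  obtain rfl : b = 1 - a := by linarith
  -- `a q(x) + (1 - a) q(y) - q(a x + (1 - a) y) = a (1 - a) q(x - y)`
  have hxy : 0 ≤ (x - y) ⬝ᵥ A *ᵥ (x - y) := by
    simpa using hA.dotProduct_mulVec_nonneg (x - y)
  have hcomm := hA.isHermitian.dotProduct_mulVec_comm x y
  simp only [mulVec_add, mulVec_sub, mulVec_smul, dotProduct_add, add_dotProduct,
    dotProduct_sub, sub_dotProduct, dotProduct_smul, smul_dotProduct, smul_eq_mul] at hxy ⊢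
  nlinarith [mul_nonneg ha hb]

theorem ContinuousOn.matrix_inv {X : Type*} [TopologicalSpace X] [DecidableEq n]
    {A : X → Matrix n n ℝ} {s : Set X} (hA : ContinuousOn A s) (hdet : ∀ x ∈ s, (A x).det ≠ 0) :
    ContinuousOn (fun x => (A x)⁻¹) s := by
  simp only [inv_def, Ring.inverse_eq_inv']
  exact ((continuous_id.matrix_det.comp_continuousOn hA).inv₀ hdet).smul
    (continuous_id.matrix_adjugate.comp_continuousOn hA)

end Matrix

section Equidistant

variable {n : Type*} [Fintype n]

theorem exists_linearIndependent_sub_of_affineSpan_eq_top {V : Set (n → ℝ)}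
    (hV : affineSpan ℝ V = ⊤) :
    ∃ u w : n → n → ℝ, (∀ i, u i ∈ V) ∧ (∀ i, w i ∈ V) ∧
      LinearIndependent ℝ fun i => u i - w i := by
  obtain ⟨s, hsV, b, hb⟩ := AffineBasis.exists_affine_subbasis hV
  obtain ⟨i₀⟩ := b.nonempty
  let e := (b.basisOf i₀).indexEquiv (Pi.basisFun ℝ n)
  refine ⟨fun i => b (e.symm i), fun _ => b i₀, fun i => hsV (by simp [hb]),
    fun _ => hsV (by simp [hb]), ?_⟩
  have hdiff : (fun i => b (e.symm i) - b i₀) = (b.basisOf i₀).reindex e := by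
    ext i : 1
    simp [AffineBasis.basisOf_apply]
  rw [hdiff]
  exact ((b.basisOf i₀).reindex e).linearIndependent

variable [DecidableEq n]

/-- The quadratic terms in `α` cancel, so the equidistance condition
`(u i - α) ⬝ᵥ A *ᵥ (u i - α) = (w i - α) ⬝ᵥ A *ᵥ (w i - α)` is the linear equation `(u i - w i) ⬝ᵥ A *ᵥ α = (u i ⬝ᵥ A *ᵥ u i - w i ⬝ᵥ A *ᵥ w i) / 2`. -/
def equidistantPoint (u w : n → n → ℝ) (A : Matrix n n ℝ) : n → ℝ :=
  (Matrix.of (fun i => u i - w i) * A)⁻¹ *ᵥ fun i => (u i ⬝ᵥ A *ᵥ u i - w i ⬝ᵥ A *ᵥ w i) / 2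

theorem eq_equidistantPoint {u w : n → n → ℝ} {A : Matrix n n ℝ} (hA : A.IsHermitian)
    (hdet : (Matrix.of (fun i => u i - w i) * A).det ≠ 0) {α : n → ℝ}
    (hα : ∀ i, (u i - α) ⬝ᵥ A *ᵥ (u i - α) = (w i - α) ⬝ᵥ A *ᵥ (w i - α)) :
    α = equidistantPoint u w A := by
  have hsystem : (Matrix.of (fun i => u i - w i) * A) *ᵥ α =
      fun i => (u i ⬝ᵥ A *ᵥ u i - w i ⬝ᵥ A *ᵥ w i) / 2 := by
    ext i
    have hi := hα i
    simp only [mulVec_sub, dotProduct_sub, sub_dotProduct, hA.dotProduct_mulVec_comm α] at hi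
    rw [← mulVec_mulVec]
    simp only [mulVec, Matrix.of_apply, sub_dotProduct] at hi ⊢
    linarith
  rw [equidistantPoint, ← hsystem, mulVec_mulVec, nonsing_inv_mul _ (isUnit_iff_ne_zero.2 hdet),
    one_mulVec]

theorem ContinuousOn.equidistantPoint {X : Type*} [TopologicalSpace X] {u w : n → n → ℝ}
    {B : X → Matrix n n ℝ} {s : Set X} (hB : ContinuousOn B s)
    (hdet : ∀ x ∈ s, (Matrix.of (fun i => u i - w i) * B x).det ≠ 0) :
    ContinuousOn (fun x => equidistantPoint u w (B x)) s := by
  have hinv : ContinuousOn (fun x => (Matrix.of (fun i => u i - w i) * B x)⁻¹) s :=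
    ((continuous_const.matrix_mul continuous_id).comp_continuousOn hB).matrix_inv hdet
  have hrhs : Continuous fun A : Matrix n n ℝ =>
      fun i => (u i ⬝ᵥ A *ᵥ u i - w i ⬝ᵥ A *ᵥ w i) / 2 := by
    fun_prop
  exact (continuous_fst.matrix_mulVec continuous_snd).comp_continuousOn
    (hinv.prodMk (hrhs.comp_continuousOn hB))

end Equidistant

section NearestLatticePoints

variable {g : ℕ}

def nearestLatticePts (A : Matrix (Fin g) (Fin g) ℝ) (α : Fin g → ℝ) : Set (Fin g → ℝ) :=
  {a | a ∈ latticePts g ∧ ∀ b ∈ latticePts g, (a - α) ⬝ᵥ A *ᵥ (a - α) ≤ (b - α) ⬝ᵥ A *ᵥ (b - α)}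

theorem isDelaunayCell_iff {A : Matrix (Fin g) (Fin g) ℝ} {σ : Set (Fin g → ℝ)} :
    IsDelaunayCell (fun x y => x ⬝ᵥ A *ᵥ y) σ ↔ ∃ α, σ = convexHull ℝ (nearestLatticePts A α) :=
  Iff.rfl

theorem convexHull_nearestLatticePts_inter_latticePts {A : Matrix (Fin g) (Fin g) ℝ}
    (hA : A.PosSemidef) (α : Fin g → ℝ) :
    convexHull ℝ (nearestLatticePts A α) ∩ latticePts g = nearestLatticePts A α := by
  refine Set.Subset.antisymm (fun a ⟨ha, haL⟩ => ⟨haL, fun b hb => ?_⟩)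
    fun a ha => ⟨subset_convexHull ℝ _ ha, ha.1⟩
  obtain ⟨y, hy, hay⟩ := (hA.convexOn_dotProduct_mulVec.translate_left (-α)
    ).exists_ge_of_mem_convexHull (Set.subset_univ _) ha
  simp only [Function.comp_apply, ← sub_eq_add_neg] at hay
  exact hay.trans (hy.2 b hb)

theorem dotProduct_mulVec_sub_eq_of_mem_nearestLatticePts {A : Matrix (Fin g) (Fin g) ℝ}
    {α u w : Fin g → ℝ} (hu : u ∈ nearestLatticePts A α) (hw : w ∈ nearestLatticePts A α) :
    (u - α) ⬝ᵥ A *ᵥ (u - α) = (w - α) ⬝ᵥ A *ᵥ (w - α) :=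
  le_antisymm (hu.2 w hw.1) (hw.2 u hu.1)

theorem isClosed_setOf_mem_nearestLatticePts (v : Fin g → ℝ) :
    IsClosed {p : Matrix (Fin g) (Fin g) ℝ × (Fin g → ℝ) | v ∈ nearestLatticePts p.1 p.2} := by
  have hset : {p : Matrix (Fin g) (Fin g) ℝ × (Fin g → ℝ) | v ∈ nearestLatticePts p.1 p.2} =
      {_p | v ∈ latticePts g} ∩ ⋂ b ∈ latticePts g,
        {p | (v - p.2) ⬝ᵥ p.1 *ᵥ (v - p.2) ≤ (b - p.2) ⬝ᵥ p.1 *ᵥ (b - p.2)} := by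
    ext
    simp [nearestLatticePts]
  rw [hset]
  exact isClosed_const.inter <| isClosed_biInter fun b _ =>
    isClosed_le (by fun_prop) (by fun_prop)

end NearestLatticePoints

theorem delaunay_cell_subset_limit_cell
    (g : ℕ) (B : ℝ → Matrix (Fin g) (Fin g) ℝ)
    (hcont : ContinuousOn B (Set.Icc 0 1))
    (hpos : ∀ t ∈ Set.Icc (0 : ℝ) 1, (B t).PosDef)
    (σ : Set (Fin g → ℝ))
    (hσ : ∀ t ∈ Set.Ioc (0 : ℝ) 1,
      IsDelaunayCell (fun x y => x ⬝ᵥ (B t).mulVec y) σ)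
    (hdim : affineSpan ℝ σ = ⊤) :
    ∃ σ' : Set (Fin g → ℝ),
      IsDelaunayCell (fun x y => x ⬝ᵥ (B 0).mulVec y) σ' ∧ σ ⊆ σ' := by
  choose α hα using fun t ht => isDelaunayCell_iff.1 (hσ t ht)
  have hnearest : ∀ t (ht : t ∈ Ioc (0 : ℝ) 1),
      nearestLatticePts (B t) (α t ht) = σ ∩ latticePts g := fun t ht => by
    conv_rhs => rw [hα t ht]
    exact (convexHull_nearestLatticePts_inter_latticePts
      (hpos t (Ioc_subset_Icc_self ht)).posSemidef _).symm
  have hσ_hull : σ = convexHull ℝ (σ ∩ latticePts g) := by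
    rw [← hnearest 1 ⟨one_pos, le_rfl⟩]
    exact hα 1 _
  obtain ⟨u, w, hu, hw, hli⟩ := exists_linearIndependent_sub_of_affineSpan_eq_top
    (by rwa [← affineSpan_convexHull, ← hσ_hull] : affineSpan ℝ (σ ∩ latticePts g) = ⊤)
  have hdet : ∀ t ∈ Icc (0 : ℝ) 1, (Matrix.of (fun i => u i - w i) * B t).det ≠ 0 := fun t ht => by
    rw [det_mul]
    exact mul_ne_zero
      ((isUnit_iff_isUnit_det _).1 (linearIndependent_rows_iff_isUnit.1 hli)).ne_zero
      (hpos t ht).det_pos.ne'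
  set F := fun t => equidistantPoint u w (B t)
  have hαF : ∀ t (ht : t ∈ Ioc (0 : ℝ) 1), α t ht = F t := fun t ht =>
    eq_equidistantPoint (hpos t (Ioc_subset_Icc_self ht)).isHermitian
      (hdet t (Ioc_subset_Icc_self ht)) fun i =>
        dotProduct_mulVec_sub_eq_of_mem_nearestLatticePts
          (hnearest t ht ▸ hu i) (hnearest t ht ▸ hw i)
  have hlim : Tendsto (fun t => (B t, F t)) (𝓝[Ioc 0 1] 0) (𝓝 (B 0, F 0)) :=
    ((hcont.prodMk (hcont.equidistantPoint hdet)) 0 (left_mem_Icc.2 zero_le_one)).mono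
      Ioc_subset_Icc_self
  have := left_nhdsWithin_Ioc_neBot (zero_lt_one' ℝ)
  refine ⟨_, ⟨F 0, rfl⟩, hσ_hull ▸ convexHull_mono fun v hv =>
    (isClosed_setOf_mem_nearestLatticePts v).mem_of_tendsto hlim ?_⟩
  filter_upwards [self_mem_nhdsWithin] with t ht
  rw [← hαF t ht, hnearest t ht]
  exact hv
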